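/- arXiv:2503.07846 — 3 statements merged into one kernel-verified Lean document; each statement's English description precedes it below -/
import Mathlib

section
/- If i ≡ j (mod gcd(e, q-1)) for positive integers e, q and integers i, j, then in any group G with elements σ, τ satisfying στσ⁻¹ = τ^q, the subgroups H_i = ⟨τ^e, τ^i σ⟩ and H_j = ⟨τ^e, τ^j σ⟩ are conjugate in the subgroup generated by σ and τ. -/
private lemma clos_pair_eq {G : Type*} [Group G] (a b : G) (m : ℤ) :
    Subgroup.closure ({a, a ^ m * b} : Set G) = Subgroup.closure ({a, b} : Set G) := by
  apply le_antisymm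
  · rw [Subgroup.closure_le]
    rintro x hx
    simp only [Set.mem_insert_iff, Set.mem_singleton_iff] at hx
    rcases hx with rfl | rfl
    · exact Subgroup.subset_closure (by simp)
    · exact mul_mem (Subgroup.zpow_mem _ (Subgroup.subset_closure (by simp)) m)
        (Subgroup.subset_closure (by simp))
  · rw [Subgroup.closure_le]
    rintro x hx
    simp only [Set.mem_insert_iff, Set.mem_singleton_iff] at hx
    rcases hx with rfl | hxb
    · exact Subgroup.subset_closure (by simp)
    · rw [hxb]
      have ha : a ∈ Subgroup.closure ({a, a ^ m * b} : Set G) :=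
        Subgroup.subset_closure (by simp)
      have hab : a ^ m * b ∈ Subgroup.closure ({a, a ^ m * b} : Set G) :=
        Subgroup.subset_closure (by simp)
      have hmem : (a ^ m)⁻¹ * (a ^ m * b) ∈ Subgroup.closure ({a, a ^ m * b} : Set G) :=
        mul_mem (inv_mem (Subgroup.zpow_mem _ ha m)) hab
      simpa using hmem

/-- If `i ≡ j (mod gcd(e, q-1))`, then `H_i = ⟨τ^e, τ^i σ⟩` and `H_j = ⟨τ^e, τ^j σ⟩`
are conjugate in `⟨σ, τ⟩`. -/
theorem stmt4 {G : Type*} [Group G] (σ τ : G) (q e : ℕ) (hq : 0 < q) (he : 0 < e)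
    (h : σ * τ * σ⁻¹ = τ ^ q) (i j : ℤ)
    (hij : (Nat.gcd e (q - 1) : ℤ) ∣ i - j) :
    ∃ g ∈ Subgroup.closure ({σ, τ} : Set G),
      Subgroup.map (MulAut.conj g).toMonoidHom
          (Subgroup.closure ({τ ^ e, τ ^ i * σ} : Set G)) =
        Subgroup.closure ({τ ^ e, τ ^ j * σ} : Set G) := by
  obtain ⟨t, ht⟩ := hij
  set a := Int.gcdA (e : ℤ) ((q : ℤ) - 1) with ha
  set b := Int.gcdB (e : ℤ) ((q : ℤ) - 1) with hb
  have hq1 : ((q - 1 : ℕ) : ℤ) = (q : ℤ) - 1 := by omega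
  have hd : (Nat.gcd e (q - 1) : ℤ) = (e : ℤ) * a + ((q : ℤ) - 1) * b := by
    have h2 : Int.gcd (e : ℤ) ((q : ℤ) - 1) = Nat.gcd e (q - 1) := by
      rw [← hq1, Int.gcd_natCast_natCast]
    rw [← h2]
    exact Int.gcd_eq_gcd_ab _ _
  set k : ℤ := b * t with hk0
  set m : ℤ := a * t with hm0
  have hk : i - k * ((q : ℤ) - 1) = j + (e : ℤ) * m := by
    rw [hd] at ht
    linear_combination ht
  have key : ∀ n : ℤ, σ * τ ^ n * σ⁻¹ = τ ^ (n * (q : ℤ)) := by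
    intro n
    have h1 : (σ * τ * σ⁻¹) ^ n = σ * τ ^ n * σ⁻¹ := by
      rw [conj_zpow]
    rw [h] at h1
    rw [← h1, ← zpow_natCast τ q, ← zpow_mul, mul_comm]
  have key2 : σ * τ ^ (-k) = τ ^ (-k * (q : ℤ)) * σ := by
    rw [← key (-k)]
    group
  refine ⟨τ ^ k, Subgroup.zpow_mem _ (Subgroup.subset_closure (by simp)) k, ?_⟩
  rw [MonoidHom.map_closure, Set.image_pair]
  have e1 : (MulAut.conj (τ ^ k)).toMonoidHom (τ ^ e) = τ ^ e := by
    simp only [MulEquiv.coe_toMonoidHom, MulAut.conj_apply]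
    rw [← zpow_natCast τ e]
    group
  have e2 : (MulAut.conj (τ ^ k)).toMonoidHom (τ ^ i * σ) = (τ ^ e) ^ m * (τ ^ j * σ) := by
    simp only [MulEquiv.coe_toMonoidHom, MulAut.conj_apply]
    have step1 : τ ^ k * (τ ^ i * σ) * (τ ^ k)⁻¹ = τ ^ k * τ ^ i * (σ * τ ^ (-k)) := by
      group
    rw [step1, key2, ← mul_assoc, ← zpow_add, ← zpow_add]
    have step2 : k + i + -k * (q : ℤ) = (e : ℤ) * m + j := by linarith [hk]
    rw [step2, zpow_add, ← zpow_natCast τ e, ← zpow_mul]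
    group
  rw [e1, e2, clos_pair_eq]
end

section
/- Let G ≤ S_d be a transitive subgroup, let σ ∈ G have cycle type (d₁, ..., d_r) on {1, ..., d}, and let G₀ = Stab_G(d) be the stabilizer of the point d. Then the number of double cosets G₀\G/⟨σ⟩ equals r, and there are double coset representatives g₁, ..., g_r such that the cardinality of the orbit of d under g_i σ g_i⁻¹ equals d_i for each i. -/
/-!
By transitivity, `a ↦ a⁻¹ • x₀` identifies `Stab(x₀)\G` with the set of points, and right
multiplication by `k ∈ K` becomes the action of `k⁻¹`. Hence `Stab(x₀)\G/K` is in bijection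
with the `K`-orbits, and the double coset of `g` with `g • p = x₀` corresponds to the orbit of
`p`. For `K = ⟨σ⟩` the orbit of `x₀ = g • p` under `g σ g⁻¹` is the `g`-translate of the
`σ`-orbit of `p`, so it has the same size.
-/

open MulAction Subgroup Pointwise

namespace MulAction

variable {G α : Type*} [Group G] [MulAction G α]

theorem mem_orbit_zpowers_iff {g : G} {x y : α} :
    y ∈ orbit (zpowers g) x ↔ ∃ k : ℤ, g ^ k • x = y := by
  constructor
  · rintro ⟨⟨_, k, rfl⟩, rfl⟩
    exact ⟨k, rfl⟩
  · rintro ⟨k, rfl⟩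
    exact ⟨⟨g ^ k, k, rfl⟩, rfl⟩

theorem orbit_zpowers_mk {H : Subgroup G} {g : G} (hg : g ∈ H) (x : α) :
    orbit (zpowers (⟨g, hg⟩ : H)) x = orbit (zpowers g) x := by
  ext y
  simp only [mem_orbit_zpowers_iff]
  rfl

theorem orbit_zpowers_conj (g h : G) (x : α) :
    orbit (zpowers (g * h * g⁻¹)) (g • x) = g • orbit (zpowers h) x := by
  ext y
  simp only [Set.mem_smul_set, mem_orbit_zpowers_iff, conj_zpow]
  constructor
  · rintro ⟨k, rfl⟩
    exact ⟨h ^ k • x, ⟨k, rfl⟩, by simp [mul_smul]⟩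
  · rintro ⟨_, ⟨k, rfl⟩, rfl⟩
    exact ⟨k, by simp [mul_smul]⟩

theorem doubleCoset_mk_stabilizer_eq_iff (x₀ : α) (K : Subgroup G) (a b : G) :
    DoubleCoset.mk (stabilizer G x₀) K a = DoubleCoset.mk (stabilizer G x₀) K b ↔
      a⁻¹ • x₀ ∈ orbit K (b⁻¹ • x₀) := by
  rw [DoubleCoset.eq, mem_orbit_iff]
  constructor
  · rintro ⟨h, hh, k, hk, rfl⟩
    refine ⟨⟨k, hk⟩, ?_⟩
    rw [mem_stabilizer_iff] at hh
    simp [mul_smul, inv_smul_eq_iff.2 hh.symm]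
  · rintro ⟨⟨k, hk⟩, hka⟩
    refine ⟨b * k⁻¹ * a⁻¹, ?_, k, hk, by group⟩
    rw [mem_stabilizer_iff, mul_smul, mul_smul, ← hka]
    simp

theorem exists_bijective_doubleCoset_stabilizer_of_orbits [IsPretransitive G α] (x₀ : α)
    (K : Subgroup G) {ι : Type*} (pts : ι → α) (horbit : ∀ x, ∃! i, x ∈ orbit K (pts i)) :
    ∃ g : ι → G, (∀ i, g i • pts i = x₀) ∧
      Function.Bijective (fun i => DoubleCoset.mk (stabilizer G x₀) K (g i)) := by
  choose g hg using fun i => exists_smul_eq G (pts i) x₀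
  have hg_inv (i : ι) : (g i)⁻¹ • x₀ = pts i := by rw [← hg i, inv_smul_smul]
  refine ⟨g, hg, fun i j hij => ?_, fun q => ?_⟩
  · rw [doubleCoset_mk_stabilizer_eq_iff, hg_inv, hg_inv] at hij
    exact (horbit (pts i)).unique (mem_orbit_self _) hij
  · obtain ⟨a, rfl⟩ := Quotient.mk''_surjective q
    obtain ⟨i, hi, -⟩ := horbit (a⁻¹ • x₀)
    exact ⟨i, ((doubleCoset_mk_stabilizer_eq_iff x₀ K a (g i)).2 (by rwa [hg_inv])).symm⟩

end MulAction

/-- For a transitive `G ≤ S_d` and `σ ∈ G` with cycle type `(d₁, …, d_r)` (orbit sizes of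
`⟨σ⟩`, including fixed points), the double coset space `G₀\G/⟨σ⟩` (where `G₀` is the
stabilizer of the last point) has exactly `r` elements, with representatives `g₁, …, g_r`
such that the orbit of the last point under `⟨gᵢσgᵢ⁻¹⟩` has size `dᵢ`. -/
theorem stmt12 (n : ℕ) (G : Subgroup (Equiv.Perm (Fin (n + 1))))
    (htrans : ∀ x y : Fin (n + 1), ∃ g ∈ G, g x = y)
    (σ : Equiv.Perm (Fin (n + 1))) (hσ : σ ∈ G)
    (r : ℕ) (c : Fin r → ℕ) (pts : Fin r → Fin (n + 1))
    (horbit : ∀ x : Fin (n + 1),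
      ∃! i : Fin r, x ∈ MulAction.orbit (Subgroup.zpowers σ) (pts i))
    (hsize : ∀ i, Nat.card (MulAction.orbit (Subgroup.zpowers σ) (pts i)) = c i) :
    ∃ g : Fin r → G,
      Function.Bijective (fun i : Fin r =>
        DoubleCoset.mk (MulAction.stabilizer G (Fin.last n))
          (Subgroup.zpowers (⟨σ, hσ⟩ : G)) (g i)) ∧
      ∀ i : Fin r,
        Nat.card (MulAction.orbit
          (Subgroup.zpowers ((g i : Equiv.Perm (Fin (n + 1))) * σ *
            (g i : Equiv.Perm (Fin (n + 1)))⁻¹)) (Fin.last n)) = c i := by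
  have : IsPretransitive G (Fin (n + 1)) :=
    ⟨fun x y => let ⟨g, hg, hgxy⟩ := htrans x y; ⟨⟨g, hg⟩, hgxy⟩⟩
  simp_rw [← orbit_zpowers_mk hσ] at horbit
  obtain ⟨g, hg, hbij⟩ :=
    exists_bijective_doubleCoset_stabilizer_of_orbits (Fin.last n) _ pts horbit
  refine ⟨g, hbij, fun i => ?_⟩
  rw [← hsize i, ← hg i, Subgroup.smul_def, orbit_zpowers_conj, Set.natCard_smul_set]
end

section
/- Let m = 2m₀ be an even positive integer. Then the point [m₀ : 1] ∈ P¹(ℤ/mℤ) is not the reduction of any point [a : b] ∈ P¹(ℚ) with coprime integers a, b satisfying max(|a|, |b|) < m₀. -/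
/-- If `m = 2m₀`, the point `[m₀ : 1] ∈ ℙ¹(ℤ/mℤ)` is not the reduction of any point
`[a : b] ∈ ℙ¹(ℚ)` of height `< m₀`. -/
theorem stmt14 (m₀ : ℕ) (hm₀ : 0 < m₀) (a b : ℤ) (hab : IsCoprime a b)
    (h : max |a| |b| < (m₀ : ℤ)) :
    ¬ ∃ g : ℤ, IsCoprime g (2 * (m₀ : ℤ)) ∧
        (2 * (m₀ : ℤ)) ∣ a - (m₀ : ℤ) * g ∧ (2 * (m₀ : ℤ)) ∣ b - g := by
  rintro ⟨g, hg, ⟨k, hk⟩, hb⟩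
  have hm : (0:ℤ) < (m₀:ℤ) := by exact_mod_cast hm₀
  -- m₀ ∣ a
  have ha0 : a = 0 := by
    have hma : (m₀:ℤ) ∣ a := ⟨2 * k + g, by linarith⟩
    rcases hma with ⟨c, hc⟩
    have : |a| < (m₀:ℤ) := lt_of_le_of_lt (le_max_left _ _) h
    have hc0 : c = 0 := by
      by_contra hcne
      have : (m₀:ℤ) ≤ |a| := by
        rw [hc, abs_mul, abs_of_pos hm]
        nlinarith [Int.one_le_abs hcne]
      linarith
    simp [hc, hc0]
  -- then 2 ∣ g
  have h2g : (2:ℤ) ∣ g := by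
    have : (m₀:ℤ) * g = (m₀:ℤ) * (-2 * k) := by linarith
    have := mul_left_cancel₀ (ne_of_gt hm) this
    exact ⟨-k, by linarith⟩
  -- but g coprime to 2
  have hcop2 : IsCoprime g (2:ℤ) := hg.of_isCoprime_of_dvd_right ⟨(m₀:ℤ), rfl⟩
  have hu : IsUnit (2:ℤ) := hcop2.isUnit_of_dvd' h2g dvd_rfl
  rw [Int.isUnit_iff] at hu; omega
end
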